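/- arXiv:1901.06837 — 2 statements merged into one kernel-verified Lean document; each statement's English description precedes it below -/
import Mathlib

section
/- Let (G,+) be a finite group, let μ be a positive integer and d a divisor of μ, and let q ≡ 1 (mod μ) be a prime power. Let Σ be a (G,k,μ) strong difference family which is of type d with respect to q, witnessed by a collection 𝔠 of k-subsets of G × F_q such that: (1) the projection of 𝔠 on G coincides with Σ, and (2) the multiset of differences Δ𝔠 equals the union over g ∈ G of {g} × D_g, where D_g = C_0^{(q−1)/d,q} · L_g and each L_g is a multiset of size μ/d on F_q^*. Suppose that for each g ∈ G, L_g is a system of representatives for the cosets of C_0^{μ/d,q} in F_q^*. Then, for any system of representatives S for the cosets of C_0^{(q−1)/d,q} in C_0^{μ/d,q}, the family 𝔅 = [C·{(1,s)} : s ∈ S, C ∈ 𝔠], where C·{(1,s)} = {(x, ys) : (x,y) ∈ C}, is a (G × F_q, G × {0}, k, 1) relative difference family. -/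
open scoped Classical

/-- The difference multiset of a multiset `A` on an additive group:
the list of differences `a - b` over ordered pairs of distinct positions of `A`. -/
def diffs {G : Type*} [AddGroup G] [DecidableEq G] (A : Multiset G) : Multiset G :=
  A.bind fun a => (A.erase a).map fun b => a - b

/-- `S` is a `(G,k,μ)` strong difference family: a family of multisets of size `k` of `G`
whose difference multiset contains every element of `G` (0 included) exactly `μ` times. -/
def IsSDF {G : Type*} [AddGroup G] [DecidableEq G]
    (S : Multiset (Multiset G)) (k μ : ℕ) : Prop :=
  (∀ A ∈ S, Multiset.card A = k) ∧ ∀ g : G, (S.bind diffs).count g = μ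

/-- `B` is a `(G,N,k,λ)` relative difference family: a family of `k`-subsets of `G` whose
difference multiset contains every element of `G \ N` exactly `λ` times and no element of `N`. -/
def IsRDF {G : Type*} [AddGroup G] [DecidableEq G]
    (B : Multiset (Finset G)) (N : AddSubgroup G) (k lam : ℕ) : Prop :=
  (∀ A ∈ B, A.card = k) ∧
  (∀ g ∈ N, (B.bind fun A => diffs A.val).count g = 0) ∧
  (∀ g : G, g ∉ N → (B.bind fun A => diffs A.val).count g = lam)

/-- The product multiset `A · L = [a * l : a ∈ A, l ∈ L]`. -/
def msMul {F : Type*} [Mul F] (A L : Multiset F) : Multiset F :=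
  A.bind fun a => L.map fun l => a * l

/-- `C0 F e` is `C_0^{e,q}`: the set of nonzero `e`-th powers of the finite field `F`
(of order `q`), viewed as a multiset with all multiplicities 1. -/
noncomputable def C0 (F : Type*) [Field F] [Fintype F] (e : ℕ) : Multiset F :=
  (Finset.univ.filter fun x : F => x ≠ 0 ∧ ∃ y : F, y ^ e = x).val

/-- A strong difference family `S` on `G` with parameter `μ` is of type `d` with respect to
the finite field `F` of (prime power) order `q`: there is a collection `C` of subsets of
`G × F` whose projection on `G` coincides with `S` and such that
`ΔC = ⋃_{g ∈ G} ({g} × D_g)` where `D_g = C_0^{(q-1)/d,q} · L_g` for some multiset `L_g`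
of size `μ/d` on `F*`. -/
def IsTypeWRT {G : Type*} [AddGroup G] [DecidableEq G]
    (F : Type*) [Field F] [Fintype F] [DecidableEq F]
    (S : Multiset (Multiset G)) (μ d : ℕ) : Prop :=
  ∃ C : Multiset (Finset (G × F)),
    (C.map fun c => c.val.map Prod.fst) = S ∧
    ∃ L : G → Multiset F,
      (∀ g : G, Multiset.card (L g) = μ / d ∧ (0 : F) ∉ L g) ∧
      ∀ (g : G) (x : F),
        (C.bind fun c => diffs c.val).count (g, x)
          = (msMul (C0 F ((Fintype.card F - 1) / d)) (L g)).count x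

/-- The bound `Q(d,m) = (1/4) (U + √(U² + 4 d^{m-1} m))²`, where
`U = Σ_{h=1}^m C(m,h)(d-1)^h (h-1)`. -/
noncomputable def Qbound (d m : ℕ) : ℝ :=
  let U : ℝ := ∑ h ∈ Finset.Icc 1 m, (m.choose h : ℝ) * ((d : ℝ) - 1) ^ h * ((h : ℝ) - 1)
  (1 / 4) * (U + Real.sqrt (U ^ 2 + 4 * (d : ℝ) ^ (m - 1) * (m : ℝ))) ^ 2

/-- `(Gr, Bl)` is a `k`-GDD on the point set `X`: `Gr` partitions `X` into groups, all blocks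
have size `k`, and every pair of distinct points is contained in exactly one block or exactly
one group, but not in both. -/
def IsGDD {X : Type*} [DecidableEq X] (Gr Bl : Finset (Finset X)) (k : ℕ) : Prop :=
  (∀ x : X, (Gr.filter fun g => x ∈ g).card = 1) ∧
  (∀ b ∈ Bl, b.card = k) ∧
  ∀ x y : X, x ≠ y →
    (Gr.filter fun g => x ∈ g ∧ y ∈ g).card + (Bl.filter fun b => x ∈ b ∧ y ∈ b).card = 1

/-- The multiset of differences of a collection of codewords. -/
def oocDiffs {v : ℕ} (C : Finset (Finset (ZMod v))) : Multiset (ZMod v) :=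
  C.val.bind fun B => diffs B.val

/-- A `(v,k,1)` optical orthogonal code: a set of `k`-subsets of `Z_v` whose list of
differences contains no repeated element. -/
def IsOOC (v k : ℕ) (C : Finset (Finset (ZMod v))) : Prop :=
  (∀ B ∈ C, B.card = k) ∧ ∀ x : ZMod v, (oocDiffs C).count x ≤ 1

/-- An optimal `(v,k,1)`-OOC: the number of nonzero elements of `Z_v` missing from its
list of differences is at most `k(k-1)`. -/
def IsOptimalOOC (v k : ℕ) (C : Finset (Finset (ZMod v))) : Prop :=
  IsOOC v k C ∧ {x : ZMod v | x ≠ 0 ∧ (oocDiffs C).count x = 0}.ncard ≤ k * (k - 1)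

/-! Multiplying the second coordinate of every block by `s` multiplies the `F`-part of every
difference by `s`, so the differences of `𝔅` lying over `g ∈ G` form `C_0^{(q-1)/d} · L_g · T`.
As `μ ∣ q - 1`, the group `C_0^{(q-1)/d}` lies in `C_0^{μ/d}`, and `T` being a transversal gives
`C_0^{(q-1)/d} · T = C_0^{μ/d}`; then `C_0^{μ/d} · L_g` covers `F_q^*` exactly once because `L_g`
is a transversal, and never contains `0`. -/

section ProductMultiset
variable {M : Type*}

lemma mem_msMul [Mul M] {A L : Multiset M} {x : M} :
    x ∈ msMul A L ↔ ∃ a ∈ A, ∃ l ∈ L, a * l = x := by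
  simp [msMul]

lemma zero_notMem_msMul [MulZeroClass M] [NoZeroDivisors M] {A L : Multiset M}
    (hA : (0 : M) ∉ A) (hL : (0 : M) ∉ L) : (0 : M) ∉ msMul A L := by
  intro h
  obtain ⟨a, ha, l, hl, hal⟩ := mem_msMul.mp h
  rcases mul_eq_zero.mp hal with rfl | rfl
  exacts [hA ha, hL hl]

lemma msMul_right_comm [CommSemigroup M] (A B C : Multiset M) :
    msMul (msMul A B) C = msMul (msMul A C) B := by
  simp only [msMul, Multiset.bind_assoc, Multiset.bind_map]
  refine Multiset.bind_congr fun a _ => ?_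
  rw [Multiset.bind_map_comm]
  simp only [mul_right_comm]

lemma count_msMul_of_ne_zero [GroupWithZero M] [DecidableEq M] (A : Multiset M)
    {T : Multiset M} (hT : ∀ s ∈ T, s ≠ 0) (x : M) :
    (msMul A T).count x = (T.map fun s => A.count (x * s⁻¹)).sum := by
  rw [msMul, Multiset.bind_map_comm, Multiset.count_bind]
  refine congrArg _ (Multiset.map_congr rfl fun s hs => ?_)
  rw [← Multiset.count_map_eq_count' (· * s) A (mul_left_injective₀ (hT s hs)),
    inv_mul_cancel_right₀ (hT s hs)]

end ProductMultiset

section PowerClasses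
variable {F : Type*} [Field F] [Fintype F]

lemma mem_C0 {e : ℕ} {x : F} : x ∈ C0 F e ↔ x ≠ 0 ∧ ∃ y : F, y ^ e = x := by
  simp [C0]

lemma mul_mem_C0 {e f : ℕ} (hfe : f ∣ e) {a b : F} (ha : a ∈ C0 F e) (hb : b ∈ C0 F f) :
    a * b ∈ C0 F f := by
  obtain ⟨ha0, y, rfl⟩ := mem_C0.mp ha
  obtain ⟨hb0, z, rfl⟩ := mem_C0.mp hb
  obtain ⟨m, rfl⟩ := hfe
  exact mem_C0.mpr ⟨mul_ne_zero ha0 hb0, y ^ m * z, by rw [mul_pow, ← pow_mul, mul_comm m]⟩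

lemma msMul_C0_eq [DecidableEq F] {e f : ℕ} (hfe : f ∣ e) {T : Multiset F}
    (hT : ∀ s ∈ T, s ∈ C0 F f) (hcount : ∀ x ∈ C0 F f, (msMul (C0 F e) T).count x = 1) :
    msMul (C0 F e) T = C0 F f := by
  refine Multiset.ext.mpr fun x => ?_
  by_cases hx : x ∈ C0 F f
  · exact (hcount x hx).trans (Multiset.count_eq_one_of_mem (Finset.nodup _) hx).symm
  · refine (Multiset.count_eq_zero_of_notMem fun h => hx ?_).trans
      (Multiset.count_eq_zero_of_notMem hx).symm
    obtain ⟨a, ha, s, hs, rfl⟩ := mem_msMul.mp h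
    exact mul_mem_C0 hfe ha (hT s hs)

end PowerClasses

lemma diffs_map {α β : Type*} [AddGroup α] [AddGroup β] [DecidableEq α] [DecidableEq β]
    (f : α →+ β) (hf : Function.Injective f) (A : Multiset α) :
    diffs (A.map f) = (diffs A).map f := by
  simp only [diffs, Multiset.bind_map, Multiset.map_bind]
  refine Multiset.bind_congr fun a _ => ?_
  rw [← Multiset.map_erase f hf, Multiset.map_map, Multiset.map_map]
  simp only [Function.comp_def, map_sub]

section Scaling
variable {G F : Type*} [AddGroup G] [DivisionRing F]

/-- `p ↦ p · (1, s)`, the map sending a block `c` to the paper's `c · {(1, s)}`. -/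
def scaleSnd (s : F) : G × F →+ G × F :=
  (AddMonoidHom.id G).prodMap (AddMonoidHom.mulRight s)

lemma scaleSnd_apply (s : F) (p : G × F) : scaleSnd s p = (p.1, p.2 * s) := rfl

lemma scaleSnd_injective {s : F} (hs : s ≠ 0) : Function.Injective (scaleSnd (G := G) s) :=
  fun a b h => by
    simp only [scaleSnd_apply, Prod.mk.injEq] at h
    exact Prod.ext h.1 (mul_right_cancel₀ hs h.2)

lemma diffs_bind_image_scaleSnd [DecidableEq G] [DecidableEq F] {T : Multiset F}
    (hT : ∀ s ∈ T, s ≠ 0) (C : Multiset (Finset (G × F))) :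
    ((T.bind fun s => C.map fun c => c.image (scaleSnd s)).bind fun A => diffs A.val)
      = T.bind fun s => (C.bind fun c => diffs c.val).map (scaleSnd s) := by
  rw [Multiset.bind_assoc]
  refine Multiset.bind_congr fun s hs => ?_
  rw [Multiset.bind_map, Multiset.map_bind]
  refine Multiset.bind_congr fun c _ => ?_
  rw [Finset.image_val_of_injOn (scaleSnd_injective (hT s hs)).injOn,
    diffs_map _ (scaleSnd_injective (hT s hs))]

lemma count_diffs_bind_image_scaleSnd [DecidableEq G] [DecidableEq F] {T : Multiset F}
    (hT : ∀ s ∈ T, s ≠ 0) (C : Multiset (Finset (G × F))) (g : G) (x : F) :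
    ((T.bind fun s => C.map fun c => c.image (scaleSnd s)).bind fun A => diffs A.val).count (g, x)
      = (T.map fun s => (C.bind fun c => diffs c.val).count (g, x * s⁻¹)).sum := by
  rw [diffs_bind_image_scaleSnd hT, Multiset.count_bind]
  refine congrArg _ (Multiset.map_congr rfl fun s hs => ?_)
  rw [← Multiset.count_map_eq_count' _ _ (scaleSnd_injective (hT s hs)) (g, x * s⁻¹),
    scaleSnd_apply, inv_mul_cancel_right₀ (hT s hs)]

end Scaling

theorem stmt0_general {G : Type*} [AddGroup G] [DecidableEq G]
    (F : Type*) [Field F] [Fintype F] [DecidableEq F]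
    (k μ d : ℕ) (hd : d ∣ μ)
    (hq : Fintype.card F % μ = 1)
    (C : Multiset (Finset (G × F)))
    (hcard : ∀ c ∈ C, c.card = k)
    (L : G → Multiset F)
    (hL : ∀ g : G, Multiset.card (L g) = μ / d ∧ (0 : F) ∉ L g)
    (hdiff : ∀ (g : G) (x : F),
      (C.bind fun c => diffs c.val).count (g, x)
        = (msMul (C0 F ((Fintype.card F - 1) / d)) (L g)).count x)
    (hrep : ∀ (g : G) (x : F), x ≠ 0 → (msMul (C0 F (μ / d)) (L g)).count x = 1)
    (T : Multiset F)
    (hT1 : ∀ s ∈ T, s ∈ C0 F (μ / d))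
    (hT2 : ∀ x ∈ C0 F (μ / d), (msMul (C0 F ((Fintype.card F - 1) / d)) T).count x = 1) :
    IsRDF (T.bind fun s => C.map fun c => c.image fun p => (p.1, p.2 * s))
      ((⊤ : AddSubgroup G).prod ⊥) k 1 := by
  show IsRDF (T.bind fun s => C.map fun c => c.image (scaleSnd s)) _ k 1
  have hT0 : ∀ s ∈ T, s ≠ 0 := fun s hs => (mem_C0.mp (hT1 s hs)).1
  have hμq : μ ∣ Fintype.card F - 1 := hq ▸ Nat.dvd_sub_mod _
  have hC0 : msMul (C0 F ((Fintype.card F - 1) / d)) T = C0 F (μ / d) :=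
    msMul_C0_eq (Nat.div_dvd_div hd hμq) hT1 hT2
  have hcount : ∀ (g : G) (x : F),
      ((T.bind fun s => C.map fun c => c.image (scaleSnd s)).bind
        fun A => diffs A.val).count (g, x) = (msMul (C0 F (μ / d)) (L g)).count x := by
    intro g x
    simp_rw [count_diffs_bind_image_scaleSnd hT0, hdiff, ← count_msMul_of_ne_zero _ hT0,
      msMul_right_comm, hC0]
  refine ⟨?_, ?_, ?_⟩
  · simp only [Multiset.mem_bind, Multiset.mem_map]
    rintro _ ⟨s, hs, c, hc, rfl⟩
    rw [Finset.card_image_of_injective _ (scaleSnd_injective (hT0 s hs)), hcard c hc]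
  · rintro ⟨g, x⟩ hgx
    obtain rfl : x = 0 := by simpa using (AddSubgroup.mem_prod.mp hgx).2
    exact (hcount g 0).trans <| Multiset.count_eq_zero_of_notMem <|
      zero_notMem_msMul (fun h => (mem_C0.mp h).1 rfl) (hL g).2
  · rintro ⟨g, x⟩ hgx
    exact (hcount g x).trans (hrep g x fun hx => hgx (AddSubgroup.mem_prod.mpr ⟨trivial, hx⟩))

/-- Proposition 1.4. If a `(G,k,μ)`-SDF `S` is of type `d` with respect to
a prime power `q ≡ 1 (mod μ)`, witnessed by a collection `C` of `k`-subsets of `G × F_q`, and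
each `L_g` is a system of representatives for the cosets of `C_0^{μ/d,q}` in `F_q*`, then
for any system of representatives `T` for the cosets of `C_0^{(q-1)/d,q}` in `C_0^{μ/d,q}`,
the family `[c · {(1,s)} : s ∈ T, c ∈ C]` is a `(G × F_q, G × {0}, k, 1)`-DF. -/
theorem stmt0 {G : Type*} [AddGroup G] [Fintype G] [DecidableEq G]
    (F : Type*) [Field F] [Fintype F] [DecidableEq F]
    (k μ d : ℕ) (hμ : 0 < μ) (hd : d ∣ μ)
    (hq : Fintype.card F % μ = 1)
    (S : Multiset (Multiset G)) (hSDF : IsSDF S k μ)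
    (C : Multiset (Finset (G × F)))
    (hcard : ∀ c ∈ C, c.card = k)
    (hproj : (C.map fun c => c.val.map Prod.fst) = S)
    (L : G → Multiset F)
    (hL : ∀ g : G, Multiset.card (L g) = μ / d ∧ (0 : F) ∉ L g)
    (hdiff : ∀ (g : G) (x : F),
      (C.bind fun c => diffs c.val).count (g, x)
        = (msMul (C0 F ((Fintype.card F - 1) / d)) (L g)).count x)
    (hrep : ∀ (g : G) (x : F), x ≠ 0 → (msMul (C0 F (μ / d)) (L g)).count x = 1)
    (T : Multiset F)
    (hT1 : ∀ s ∈ T, s ∈ C0 F (μ / d))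
    (hT2 : ∀ x ∈ C0 F (μ / d), (msMul (C0 F ((Fintype.card F - 1) / d)) T).count x = 1) :
    IsRDF (T.bind fun s => C.map fun c => c.image fun p => (p.1, p.2 * s))
      ((⊤ : AddSubgroup G).prod ⊥) k 1 :=
  stmt0_general F k μ d hd hq C hcard L hL hdiff hrep T hT1 hT2
end

section
/- Let r ≥ 5 be an integer, let α be a permutation of the elements of Z_r, and let a ∈ Z_r. Then there exists a permutation π of the elements of Z_r such that for every x ∈ Z_r with α(x) ≠ x, one has π(α(x)) − π(x) ≠ a. -/
open scoped Classical

/-!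
Writing `β = π α π⁻¹`, the condition asks that `β y - y ≠ a` for every point `y` moved by `β`;
since conjugacy classes of permutations are determined by cycle type, it suffices to build one
such `β` with the cycle type of `α`. Its cycles are laid out on consecutive intervals
`[v, v + l)` of `Z_r`. Run upwards, an `l`-cycle has steps `1` and `1 - l`; run downwards
(the inverse), `-1` and `l - 1`. One of the two avoids `a` unless `l = 2` and `a = ±1`, or
`a = l - 1 = -a`, where the upward run with its first two points swapped works. For `a = ±1`
the `u` transpositions become `(j, j + u)`, `j < u`, when `u ≠ 1`, and a lone transposition
becomes `(0 2)`, the point `1` being absorbed into the next cycle `1 → 3 → 4 → ⋯`.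
-/

open Equiv Equiv.Perm Finset Function

theorem Fin.val_add_one_eq_ite {n : ℕ} (i : Fin (n + 2)) :
    ((i + 1 : Fin (n + 2)) : ℕ) = if (i : ℕ) = n + 1 then 0 else (i : ℕ) + 1 := by
  simp [Fin.val_add_one, Fin.ext_iff]

section General

variable {G : Type*} [AddGroup G]

def AvoidsStep (a : G) (σ : Perm G) : Prop :=
  ∀ x, σ x ≠ x → σ x - x ≠ a

theorem AvoidsStep.mul {a : G} {σ τ : Perm G} (hστ : σ.Disjoint τ) (hσ : AvoidsStep a σ)
    (hτ : AvoidsStep a τ) : AvoidsStep a (σ * τ) := by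
  intro x hx
  by_cases hτx : τ x = x
  · rw [mul_apply, hτx] at hx ⊢
    exact hσ x hx
  · have hσ_τx : σ (τ x) = τ x :=
      (hστ (τ x)).resolve_right fun h => hτx (τ.injective h)
    rw [mul_apply, hσ_τx]
    exact hτ x hτx

theorem AvoidsStep.inv {a : G} {σ : Perm G} (hσ : AvoidsStep a σ) : AvoidsStep (-a) σ⁻¹ := by
  intro x hx h
  obtain ⟨y, rfl⟩ := σ.surjective x
  simp only [Perm.coe_inv, symm_apply_apply] at hx h
  exact hσ y (Ne.symm hx) (by rw [← neg_sub, h, neg_neg])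

variable [Fintype G] [DecidableEq G]

def HasAvoidingPerm (a : G) (S : Finset G) (M : Multiset ℕ) : Prop :=
  ∃ σ : Perm G, σ.cycleType = M ∧ σ.support ⊆ S ∧ AvoidsStep a σ

variable {a : G} {S T : Finset G} {M N : Multiset ℕ}

theorem hasAvoidingPerm_zero : HasAvoidingPerm a S 0 :=
  ⟨1, cycleType_one, by simp, fun x hx => absurd rfl hx⟩

theorem HasAvoidingPerm.mono (h : HasAvoidingPerm a S M) (hST : S ⊆ T) : HasAvoidingPerm a T M :=
  let ⟨σ, hσM, hσS, hσ⟩ := h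
  ⟨σ, hσM, hσS.trans hST, hσ⟩

theorem HasAvoidingPerm.neg (h : HasAvoidingPerm a S M) : HasAvoidingPerm (-a) S M :=
  let ⟨σ, hσM, hσS, hσ⟩ := h
  ⟨σ⁻¹, by rwa [cycleType_inv], by rwa [Perm.support_inv], hσ.inv⟩

theorem HasAvoidingPerm.union (hST : Disjoint S T) (hS : HasAvoidingPerm a S M)
    (hT : HasAvoidingPerm a T N) : HasAvoidingPerm a (S ∪ T) (M + N) := by
  obtain ⟨σ, hσM, hσS, hσ⟩ := hS
  obtain ⟨τ, hτN, hτT, hτ⟩ := hT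
  have hστ : σ.Disjoint τ :=
    disjoint_iff_disjoint_support.mpr (hST.mono hσS hτT)
  exact ⟨σ * τ, by rw [hστ.cycleType_mul, hσM, hτN],
    hστ.support_mul ▸ union_subset_union hσS hτT, hσ.mul hστ hτ⟩

theorem hasAvoidingPerm_finRotate {n : ℕ} (f : Fin (n + 2) ↪ G)
    (h : ∀ i, f (i + 1) - f i ≠ a) : HasAvoidingPerm a (univ.map f) {n + 2} := by
  refine ⟨(finRotate (n + 2)).viaFintypeEmbedding f, ?_, fun y hy => ?_, fun y hy => ?_⟩
  · simp [viaFintypeEmbedding, cycleType_finRotate]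
  · by_contra hyf
    exact mem_support.mp hy
      (viaFintypeEmbedding_apply_notMem_range _ _ (by simpa using hyf))
  · by_cases hyf : y ∈ Set.range f
    · obtain ⟨i, rfl⟩ := hyf
      rw [viaFintypeEmbedding_apply_image, finRotate_apply]
      exact h i
    · exact absurd (viaFintypeEmbedding_apply_notMem_range _ _ hyf) hy

end General

section ZMod

variable {r : ℕ} {a : ZMod r} {M N : Multiset ℕ}

theorem natCast_injOn_Iio : Set.InjOn (Nat.cast : ℕ → ZMod r) (Set.Iio r) := fun k hk m hm h => by
  simpa [ZMod.val_cast_of_lt hk, ZMod.val_cast_of_lt hm] using congrArg ZMod.val h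

theorem natCast_ne_zero_of_lt {k : ℕ} (hk : 0 < k) (hkr : k < r) : (k : ZMod r) ≠ 0 := by
  rw [Ne, ZMod.natCast_eq_zero_iff]
  exact Nat.not_dvd_of_pos_of_lt hk hkr

theorem natCast_ne_and_neg_natCast_ne {d : ℕ} (hd : d ≠ 1) (hdr : d + 1 < r)
    (ha : a = 1 ∨ a = -1) : (d : ZMod r) ≠ a ∧ -(d : ZMod r) ≠ a := by
  have h₁ : (d : ZMod r) ≠ 1 := by
    rw [← Nat.cast_one]
    exact fun h =>
      hd (natCast_injOn_Iio (Set.mem_Iio.mpr (by omega)) (Set.mem_Iio.mpr (by omega)) h)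
  have h₂ : (d : ZMod r) + 1 ≠ 0 := by exact_mod_cast natCast_ne_zero_of_lt (by omega) hdr
  rcases ha with rfl | rfl <;> refine ⟨fun h => ?_, fun h => ?_⟩
  · exact h₁ h
  · exact h₂ (by linear_combination -h)
  · exact h₂ (by linear_combination h)
  · exact h₁ (by linear_combination -h)

variable [NeZero r]

theorem HasAvoidingPerm.union_natCast {A B : Finset ℕ} (hAB : Disjoint A B)
    (hr : ∀ k ∈ A ∪ B, k < r) (hA : HasAvoidingPerm a (A.image Nat.cast) M)
    (hB : HasAvoidingPerm a (B.image Nat.cast) N) :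
    HasAvoidingPerm a ((A ∪ B).image Nat.cast) (M + N) := by
  rw [image_union]
  refine hA.union (disjoint_left.mpr ?_) hB
  simp only [mem_image]
  rintro _ ⟨k, hk, rfl⟩ ⟨m, hm, hmk⟩
  have hmk' : m = k := natCast_injOn_Iio (hr m (by simp [hm])) (hr k (by simp [hk])) hmk
  exact disjoint_left.mp hAB hk (hmk' ▸ hm)

theorem HasAvoidingPerm.Ico_append {u v w : ℕ} (huv : u ≤ v) (hvw : v ≤ w) (hwr : w ≤ r)
    (h₁ : HasAvoidingPerm a ((Ico u v).image Nat.cast) M)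
    (h₂ : HasAvoidingPerm a ((Ico v w).image Nat.cast) N) :
    HasAvoidingPerm a ((Ico u w).image Nat.cast) (M + N) := by
  rw [← Ico_union_Ico_eq_Ico huv hvw]
  exact h₁.union_natCast (Ico_disjoint_Ico_consecutive u v w)
    (fun k hk => by simp only [mem_union, mem_Ico] at hk; omega) h₂

theorem hasAvoidingPerm_natCast_cycle {n : ℕ} {A : Finset ℕ} (hA : ∀ k ∈ A, k < r)
    (g : Fin (n + 2) → ℕ) (hg : Injective g) (hgA : ∀ i, g i ∈ A)
    (h : ∀ i, (g (i + 1) : ZMod r) - g i ≠ a) :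
    HasAvoidingPerm a (A.image Nat.cast) {n + 2} := by
  let f : Fin (n + 2) ↪ ZMod r :=
    ⟨fun i => g i, fun i j hij => hg (natCast_injOn_Iio (hA _ (hgA i)) (hA _ (hgA j)) hij)⟩
  refine (hasAvoidingPerm_finRotate f h).mono fun y hy => ?_
  obtain ⟨i, -, rfl⟩ := mem_map.mp hy
  exact mem_image_of_mem _ (hgA i)

theorem hasAvoidingPerm_Ico_ascending {v n : ℕ} (hvn : v + (n + 2) ≤ r) (h₁ : a ≠ 1)
    (h₂ : a ≠ -(n + 1 : ℕ)) :
    HasAvoidingPerm a ((Ico v (v + (n + 2))).image Nat.cast) {n + 2} := by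
  refine hasAvoidingPerm_natCast_cycle (fun k hk => by rw [mem_Ico] at hk; omega) (fun i => v + i)
    (fun i j hij => Fin.ext (by simpa using hij)) (fun i => by rw [mem_Ico]; omega) fun i h => ?_
  rw [Fin.val_add_one_eq_ite] at h
  split_ifs at h with hi
  · exact h₂ (by rw [← h, hi]; push_cast; ring1)
  · exact h₁ (by rw [← h]; push_cast; ring1)

theorem hasAvoidingPerm_Ico_swapFirst {v n : ℕ} (hvn : v + (n + 2) ≤ r) (h₁ : a ≠ 1)
    (h₂ : a ≠ 2) (h₃ : a ≠ -1) (h₄ : a ≠ -n) :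
    HasAvoidingPerm a ((Ico v (v + (n + 2))).image Nat.cast) {n + 2} := by
  refine hasAvoidingPerm_natCast_cycle (fun k hk => by rw [mem_Ico] at hk; omega)
    (fun i => v + if (i : ℕ) = 0 then 1 else if (i : ℕ) = 1 then 0 else (i : ℕ))
    (fun i j hij => Fin.ext (by simp only at hij; split_ifs at hij <;> omega))
    (fun i => by rw [mem_Ico]; split_ifs <;> omega) fun i h => ?_
  -- the steps are `-1, 2, 1, …, 1, -n`
  rw [Fin.val_add_one_eq_ite] at h
  split_ifs at h <;> (try simp only [*] at h) <;> first
    | omega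
    | (apply h₁; rw [← h]; push_cast; ring1)
    | (apply h₂; rw [← h]; push_cast; ring1)
    | (apply h₃; rw [← h]; push_cast; ring1)
    | (apply h₄; rw [← h]; push_cast; ring1)

theorem hasAvoidingPerm_Ico_cycle (hr : 5 ≤ r) {v l : ℕ} (hl : 2 ≤ l) (hvl : v + l ≤ r)
    (ha : 3 ≤ l ∨ a ≠ 1 ∧ a ≠ -1) :
    HasAvoidingPerm a ((Ico v (v + l)).image Nat.cast) {l} := by
  obtain ⟨n, rfl⟩ : ∃ n, l = n + 2 := ⟨l - 2, by omega⟩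
  by_cases hasc : a ≠ 1 ∧ a ≠ -(n + 1 : ℕ)
  · exact hasAvoidingPerm_Ico_ascending hvl hasc.1 hasc.2
  by_cases hdesc : -a ≠ 1 ∧ -a ≠ -(n + 1 : ℕ)
  · simpa using (hasAvoidingPerm_Ico_ascending hvl hdesc.1 hdesc.2).neg
  -- both runs fail only if `a = n + 1 = -a`, and then `a ∉ {±1, 2, -n}` since `r ≥ 5`
  push Not at hasc hdesc
  have h2 : ((2 : ℕ) : ZMod r) ≠ 0 := natCast_ne_zero_of_lt two_pos (by omega)
  have hn : (n : ZMod r) = 0 → 3 ≤ n + 2 → False := fun h hn =>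
    natCast_ne_zero_of_lt (by omega) (by omega) h
  have ha₁ : a ≠ 1 := by
    rintro rfl
    have h := hdesc fun h => h2 (by push_cast; linear_combination -h)
    exact hn (by push_cast at h; linear_combination h) (ha.resolve_right (by simp))
  have ha₂ : a ≠ -1 := by
    rintro rfl
    have h := hasc fun h => h2 (by push_cast; linear_combination -h)
    exact hn (by push_cast at h; linear_combination h) (ha.resolve_right (by simp))
  have hpos := hasc ha₁
  have hneg := hdesc fun h => ha₂ (by linear_combination -h)
  refine hasAvoidingPerm_Ico_swapFirst hvl ha₁ (fun h => ?_) ha₂ (fun h => ?_)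
  · apply natCast_ne_zero_of_lt (r := r) (k := 4) (by norm_num) (by omega)
    push_cast
    linear_combination hpos - hneg - 2 * h
  · apply natCast_ne_zero_of_lt (r := r) (k := 1) one_pos (by omega)
    push_cast at hpos ⊢
    linear_combination hpos - h

theorem hasAvoidingPerm_Ico_of_forall
    (hM : ∀ l ∈ M, ∀ v, v + l ≤ r → HasAvoidingPerm a ((Ico v (v + l)).image Nat.cast) {l})
    (v : ℕ) (hv : v + M.sum ≤ r) :
    HasAvoidingPerm a ((Ico v (v + M.sum)).image Nat.cast) M := by
  induction M using Multiset.induction_on generalizing v with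
  | empty => exact hasAvoidingPerm_zero
  | cons l M ih =>
    rw [Multiset.sum_cons] at hv ⊢
    rw [← Multiset.singleton_add, ← add_assoc]
    exact (hM l (Multiset.mem_cons_self l M) v (by omega)).Ico_append (by omega) (by omega)
      (by omega) (ih (fun k hk => hM k (Multiset.mem_cons_of_mem hk)) (v + l) (by omega))

theorem hasAvoidingPerm_replicate_two {d : ℕ} (hd₁ : (d : ZMod r) ≠ a)
    (hd₂ : -(d : ZMod r) ≠ a) :
    ∀ k ≤ d, d + k ≤ r →
      HasAvoidingPerm a ((range k ∪ Ico d (d + k)).image Nat.cast) (Multiset.replicate k 2)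
  | 0, _, _ => hasAvoidingPerm_zero
  | k + 1, hk, hkr => by
    have hpair : HasAvoidingPerm a (({k, d + k} : Finset ℕ).image Nat.cast) {2} :=
      hasAvoidingPerm_natCast_cycle (n := 0) (fun m hm => by simp at hm; omega) ![k, d + k]
        (fun i j hij => by fin_cases i <;> fin_cases j <;> simp_all)
        (fun i => by fin_cases i <;> simp)
        (fun i h => by
          fin_cases i
          · exact hd₁ (by simpa using h)
          · exact hd₂ (by simpa using h))
    have := (hasAvoidingPerm_replicate_two hd₁ hd₂ k (by omega) (by omega)).union_natCast
      (disjoint_left.mpr fun m hm hm' => by simp at hm hm'; omega)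
      (fun m hm => by simp at hm; omega) hpair
    convert this using 2
    · ext m
      simp only [mem_union, mem_range, mem_Ico, mem_insert, mem_singleton]
      omega
    · rw [Multiset.replicate_succ, ← Multiset.singleton_add, add_comm]

theorem hasAvoidingPerm_Ico_swap_cycle (hr : 5 ≤ r) (ha : a = 1 ∨ a = -1) {n : ℕ}
    (hn : 1 ≤ n) (hnr : n + 4 ≤ r) :
    HasAvoidingPerm a ((Ico 0 (n + 4)).image Nat.cast) {2, n + 2} := by
  suffices h : HasAvoidingPerm (-1 : ZMod r) ((Ico 0 (n + 4)).image Nat.cast) {2, n + 2} by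
    rcases ha with rfl | rfl
    · simpa using h.neg
    · exact h
  have hk : ∀ k, 0 < k → k < r → (k : ZMod r) ≠ 0 := fun k => natCast_ne_zero_of_lt
  have hswap : HasAvoidingPerm (-1 : ZMod r) (({0, 2} : Finset ℕ).image Nat.cast) {2} :=
    hasAvoidingPerm_natCast_cycle (n := 0) (fun m hm => by simp at hm; omega) ![0, 2]
      (fun i j hij => by fin_cases i <;> fin_cases j <;> simp_all)
      (fun i => by fin_cases i <;> simp)
      (fun i h => by
        fin_cases i
        · exact hk 3 (by norm_num) (by omega) (by simp at h; push_cast; linear_combination h)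
        · exact hk 1 one_pos (by omega) (by simp at h; push_cast; linear_combination h))
  have hcycle : HasAvoidingPerm (-1 : ZMod r) ((insert 1 (Ico 3 (n + 4))).image Nat.cast) {n + 2} :=
    hasAvoidingPerm_natCast_cycle (fun m hm => by simp at hm; omega)
      (fun i => if (i : ℕ) = 0 then 1 else (i : ℕ) + 2)
      (fun i j hij => Fin.ext (by simp only at hij; split_ifs at hij <;> omega))
      (fun i => by simp only [mem_insert, mem_Ico]; split_ifs <;> omega) fun i h => by
        -- the steps are `2, 1, …, 1, -(n + 2)`
        rw [Fin.val_add_one_eq_ite] at h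
        split_ifs at h <;> (try simp only [*] at h) <;> first
          | omega
          | exact hk 3 (by norm_num) (by omega) (by push_cast at h ⊢; linear_combination h)
          | exact hk 2 (by norm_num) (by omega) (by push_cast at h ⊢; linear_combination h)
          | exact hk (n + 1) (by omega) (by omega) (by push_cast at h ⊢; linear_combination -h)
  refine (hswap.union_natCast ?_ ?_ hcycle).mono (image_subset_image ?_)
  · exact disjoint_left.mpr fun m hm hm' => by simp at hm hm'; omega
  · exact fun m hm => by simp at hm; omega
  · exact fun m hm => by simp at hm ⊢; omega

theorem hasAvoidingPerm_Ico_of_three_le (hr : 5 ≤ r) {T : Multiset ℕ} (hT : ∀ l ∈ T, 3 ≤ l)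
    (v : ℕ) (hv : v + T.sum ≤ r) : HasAvoidingPerm a ((Ico v (v + T.sum)).image Nat.cast) T :=
  hasAvoidingPerm_Ico_of_forall (fun l hl _ hvl =>
    hasAvoidingPerm_Ico_cycle hr (by have := hT l hl; omega) hvl (Or.inl (hT l hl))) v hv

theorem exists_hasAvoidingPerm_of_eq_one_or_neg_one (hr : 5 ≤ r) (ha : a = 1 ∨ a = -1)
    (hM : ∀ l ∈ M, 2 ≤ l) (hsum : M.sum ≤ r) :
    ∃ S, HasAvoidingPerm a S M := by
  obtain ⟨u, T, rfl, hT⟩ : ∃ u T, M = Multiset.replicate u 2 + T ∧ ∀ l ∈ T, 3 ≤ l := by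
    refine ⟨M.count 2, M.filter (· ≠ 2), ?_, fun l hl => ?_⟩
    · rw [← Multiset.filter_eq', Multiset.filter_add_not]
    · rw [Multiset.mem_filter] at hl
      have := hM l hl.1
      omega
  have huT : 2 * u + T.sum ≤ r := by
    rw [Multiset.sum_add, Multiset.sum_replicate, smul_eq_mul] at hsum
    omega
  by_cases hu : u = 1
  · subst hu
    obtain rfl | ⟨l, hl⟩ := Multiset.empty_or_exists_mem T
    · obtain ⟨h₁, h₂⟩ := natCast_ne_and_neg_natCast_ne (d := 2) (by norm_num) (by omega) ha
      rw [add_zero]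
      exact ⟨_, hasAvoidingPerm_replicate_two h₁ h₂ 1 (by norm_num) (by omega)⟩
    · obtain ⟨T', rfl⟩ := Multiset.exists_cons_of_mem hl
      obtain ⟨n, rfl⟩ : ∃ n, l = n + 2 := ⟨l - 2, by have := hT l hl; omega⟩
      rw [Multiset.sum_cons] at huT
      have hsplit : Multiset.replicate 1 2 + (n + 2) ::ₘ T' = {2, n + 2} + T' := by
        simp only [Multiset.replicate_one, Multiset.singleton_add, Multiset.insert_eq_cons,
          Multiset.cons_add]
      rw [hsplit]
      have hswap := hasAvoidingPerm_Ico_swap_cycle hr ha (n := n)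
        (by have := hT _ hl; omega) (by omega)
      exact ⟨_, hswap.Ico_append (by omega) (by omega) (by omega)
        (hasAvoidingPerm_Ico_of_three_le hr (fun l hl => hT l (Multiset.mem_cons_of_mem hl))
          (n + 4) (by omega))⟩
  · obtain ⟨h₁, h₂⟩ := natCast_ne_and_neg_natCast_ne (d := u) hu (by omega) ha
    have hpairs := hasAvoidingPerm_replicate_two h₁ h₂ u le_rfl (by omega)
    rw [range_eq_Ico, Ico_union_Ico_eq_Ico (Nat.zero_le u) (Nat.le_add_right u u)] at hpairs
    exact ⟨_, hpairs.Ico_append (Nat.zero_le _) (Nat.le_add_right _ _) (by omega)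
      (hasAvoidingPerm_Ico_of_three_le hr hT (u + u) (by omega))⟩

theorem exists_avoidsStep_cycleType (hr : 5 ≤ r) (a : ZMod r)
    (hM : ∀ l ∈ M, 2 ≤ l) (hsum : M.sum ≤ r) :
    ∃ β : Perm (ZMod r), β.cycleType = M ∧ AvoidsStep a β := by
  suffices ∃ S, HasAvoidingPerm a S M by
    obtain ⟨S, β, hβM, -, hβ⟩ := this
    exact ⟨β, hβM, hβ⟩
  by_cases ha : a = 1 ∨ a = -1
  · exact exists_hasAvoidingPerm_of_eq_one_or_neg_one hr ha hM hsum
  · exact ⟨_, hasAvoidingPerm_Ico_of_forall (fun l hl v hv =>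
      hasAvoidingPerm_Ico_cycle hr (hM l hl) hv (Or.inr (not_or.mp ha))) 0 (by simpa)⟩

end ZMod

/-- Lemma 3.5. For `r ≥ 5`, a permutation `α` of `Z_r` and `a ∈ Z_r`,
there is a permutation `π` of `Z_r` with `π(α(x)) - π(x) ≠ a` for every non-fixed point `x`
of `α`. -/
theorem stmt12 (r : ℕ) (hr : 5 ≤ r) (α : Equiv.Perm (ZMod r)) (a : ZMod r) :
    ∃ π : Equiv.Perm (ZMod r), ∀ x : ZMod r, α x ≠ x → π (α x) - π x ≠ a := by
  have : NeZero r := ⟨by omega⟩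
  obtain ⟨β, hβα, hβ⟩ := exists_avoidsStep_cycleType hr a (M := α.cycleType)
    (fun _ => two_le_of_mem_cycleType) (by simpa [sum_cycleType] using card_le_univ α.support)
  obtain ⟨π, hπ⟩ := isConj_iff.mp (isConj_iff_cycleType_eq.mpr hβα.symm)
  have hπα : ∀ x, β (π x) = π (α x) := fun x => by rw [← hπ]; simp
  refine ⟨π, fun x hx => ?_⟩
  rw [← hπα]
  exact hβ (π x) (by rw [hπα]; exact π.injective.ne hx)
end
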